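/- Let K be a field of characteristic 0, c ∈ K, and Q, P ∈ K[t] with deg Q ≤ 2 and deg P ≤ 3. In K[t,x] set F := (t+c)·x² − Q(t)·x − P(t), and let D_F(g) := (∂F/∂x)·(∂g/∂t) − (∂F/∂t)·(∂g/∂x), so that D_F(t) = 2(t+c)x − Q(t) and D_F(x) = P'(t) + Q'(t)x − x². For each natural number k ≥ 1, let M'_k ⊆ K[t,x] be the K-span of {t^i : 0 ≤ i ≤ k} ∪ {t^j·x : 0 ≤ j ≤ k−1}, and let N_{k+1} ⊆ K[t,x] be the K-span of {t^i : 0 ≤ i ≤ k+1} ∪ {t^j·x : 0 ≤ j ≤ k} ∪ {x²}. Then for every g ∈ M'_k, D_F(g) lies in N_{k+1} + (F), where (F) is the ideal generated by F. -/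

import Mathlib

/-!
Write `t = X 0`, `x = X 1` and `D = D_F`. Since `D` is a derivation, `D (p(t)) = p'(t) F_x` and
`D (q(t) x) = q(t) D x + x q'(t) F_x`, and with `F_x = 2(t + c)x - Q(t)`,
`F_t = x² - Q'(t)x - P'(t)` every term lands in `N_{k+1}` except a multiple `r(t) x²` with
`deg r ≤ k - 1`. Such a term is reduced modulo `F` by induction on the power of `t`:
`t^{j+1} x² = t^j F + t^j Q(t) x + t^j P(t) - c t^j x²`.
-/

open MvPolynomial

namespace OdesskiiWolf

lemma natDegree_derivative_mul_le {R : Type*} [Semiring R] (p q : Polynomial R) :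
    (Polynomial.derivative p * q).natDegree ≤ p.natDegree + q.natDegree - 1 := by
  by_cases hp : p.natDegree = 0
  · simp [Polynomial.derivative_of_natDegree_zero hp]
  · calc (Polynomial.derivative p * q).natDegree
        ≤ (Polynomial.derivative p).natDegree + q.natDegree := Polynomial.natDegree_mul_le
      _ ≤ p.natDegree - 1 + q.natDegree := by gcongr; exact Polynomial.natDegree_derivative_le p
      _ = p.natDegree + q.natDegree - 1 := by omega

lemma natDegree_X_add_C_le {R : Type*} [Semiring R] (a : R) :
    (Polynomial.X + Polynomial.C a).natDegree ≤ 1 :=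
  Polynomial.natDegree_add_C.trans_le Polynomial.natDegree_X_le

lemma aeval_mul_mem_span_pow_mul {R A : Type*} [CommSemiring R] [Semiring A] [Algebra R A]
    (a m : A) {p : Polynomial R} {n : ℕ} (hp : p.natDegree ≤ n) :
    Polynomial.aeval a p * m ∈ Submodule.span R {b | ∃ i ≤ n, b = a ^ i * m} := by
  rw [Polynomial.aeval_eq_sum_range' (Nat.lt_succ_of_le hp), Finset.sum_mul]
  refine Submodule.sum_mem _ fun i hi => ?_
  rw [smul_mul_assoc]
  exact Submodule.smul_mem _ _
    (Submodule.subset_span ⟨i, Nat.lt_succ_iff.mp (Finset.mem_range.mp hi), rfl⟩)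

variable {R : Type*} [CommRing R]

noncomputable def curve (c : R) (Q P : Polynomial R) : MvPolynomial (Fin 2) R :=
  (X 0 + C c) * X 1 ^ 2 - Polynomial.aeval (X 0) Q * X 1 - Polynomial.aeval (X 0) P

noncomputable def owDerivation (F : MvPolynomial (Fin 2) R) :
    Derivation R (MvPolynomial (Fin 2) R) (MvPolynomial (Fin 2) R) :=
  pderiv 1 F • pderiv 0 - pderiv 0 F • pderiv 1

noncomputable def M' (k : ℕ) : Submodule R (MvPolynomial (Fin 2) R) :=
  Submodule.span R ({a | ∃ i ≤ k, a = X 0 ^ i} ∪ {a | ∃ j, j + 1 ≤ k ∧ a = X 0 ^ j * X 1})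

/-- `N F k` is the paper's `N_{k+1} + (F)`. -/
noncomputable def N (F : MvPolynomial (Fin 2) R) (k : ℕ) : Submodule R (MvPolynomial (Fin 2) R) :=
  Submodule.span R
    ({a | ∃ i ≤ k + 1, a = X 0 ^ i} ∪ {a | ∃ j, j ≤ k ∧ a = X 0 ^ j * X 1} ∪ {X 1 ^ 2}) ⊔
  (Ideal.span {F}).restrictScalars R

section Derivatives

variable (F : MvPolynomial (Fin 2) R) (c : R) (Q P : Polynomial R)

lemma owDerivation_apply (g : MvPolynomial (Fin 2) R) :
    owDerivation F g = pderiv 1 F * pderiv 0 g - pderiv 0 F * pderiv 1 g := rfl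

lemma owDerivation_X_zero : owDerivation F (X 0) = pderiv 1 F := by
  simp [owDerivation_apply]

lemma owDerivation_X_one : owDerivation F (X 1) = -pderiv 0 F := by
  simp [owDerivation_apply]

lemma pderiv_one_curve :
    pderiv 1 (curve c Q P) = 2 * (X 0 + C c) * X 1 - Polynomial.aeval (X 0) Q := by
  simp [curve]
  ring

lemma pderiv_zero_curve :
    pderiv 0 (curve c Q P) = X 1 ^ 2 - Polynomial.aeval (X 0) (Polynomial.derivative Q) * X 1
      - Polynomial.aeval (X 0) (Polynomial.derivative P) := by
  simp [curve]
  ring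

end Derivatives

section Filtration

variable {F : MvPolynomial (Fin 2) R} {k : ℕ}

lemma aeval_mem_N {p : Polynomial R} (hp : p.natDegree ≤ k + 1) :
    Polynomial.aeval (X 0) p ∈ N F k := by
  have h := aeval_mul_mem_span_pow_mul (X 0 : MvPolynomial (Fin 2) R) 1 hp
  simp only [mul_one] at h
  exact Submodule.mem_sup_left (Submodule.span_mono (fun _ ha => Or.inl (Or.inl ha)) h)

lemma aeval_mul_X_one_mem_N {p : Polynomial R} (hp : p.natDegree ≤ k) :
    Polynomial.aeval (X 0) p * X 1 ∈ N F k :=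
  Submodule.mem_sup_left (Submodule.span_mono (fun _ ha => Or.inl (Or.inr ha))
    (aeval_mul_mem_span_pow_mul _ _ hp))

lemma X_one_sq_mem_N : X 1 ^ 2 ∈ N F k :=
  Submodule.mem_sup_left (Submodule.subset_span (Or.inr rfl))

lemma mul_mem_N (a : MvPolynomial (Fin 2) R) : a * F ∈ N F k :=
  Submodule.mem_sup_right (Ideal.mul_mem_left _ a (Ideal.subset_span rfl))

variable {c : R} {Q P : Polynomial R}

lemma X_zero_pow_mul_X_one_sq_mem_N (hQ : Q.natDegree ≤ 2) (hP : P.natDegree ≤ 3) :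
    ∀ j, j + 1 ≤ k → X 0 ^ j * X 1 ^ 2 ∈ N (curve c Q P) k
  | 0, _ => by simpa using X_one_sq_mem_N
  | j + 1, hj => by
    have reduce : X 0 ^ (j + 1) * X 1 ^ 2 = X 0 ^ j * curve c Q P
        + Polynomial.aeval (X 0) (Polynomial.X ^ j * Q) * X 1
        + Polynomial.aeval (X 0) (Polynomial.X ^ j * P) - c • (X 0 ^ j * X 1 ^ 2) := by
      simp only [curve, map_mul, map_pow, Polynomial.aeval_X, smul_eq_C_mul]
      ring
    have degree_le {S : Polynomial R} {n : ℕ} (hS : S.natDegree ≤ n) :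
        (Polynomial.X ^ j * S).natDegree ≤ j + n :=
      Polynomial.natDegree_mul_le.trans (add_le_add (Polynomial.natDegree_X_pow_le j) hS)
    rw [reduce]
    refine Submodule.sub_mem _ (Submodule.add_mem _ (Submodule.add_mem _ (mul_mem_N _) ?_) ?_)
      (Submodule.smul_mem _ _ (X_zero_pow_mul_X_one_sq_mem_N hQ hP j (by omega)))
    · exact aeval_mul_X_one_mem_N ((degree_le hQ).trans (by omega))
    · exact aeval_mem_N ((degree_le hP).trans (by omega))

lemma aeval_mul_X_one_sq_mem_N (hQ : Q.natDegree ≤ 2) (hP : P.natDegree ≤ 3)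
    {r : Polynomial R} (hr : r.natDegree + 1 ≤ k) :
    Polynomial.aeval (X 0) r * X 1 ^ 2 ∈ N (curve c Q P) k := by
  refine Submodule.span_le.mpr ?_ (aeval_mul_mem_span_pow_mul _ _ le_rfl)
  rintro _ ⟨j, hj, rfl⟩
  exact X_zero_pow_mul_X_one_sq_mem_N hQ hP j (by omega)

lemma owDerivation_aeval_mem_N (hQ : Q.natDegree ≤ 2) {p : Polynomial R}
    (hp : p.natDegree ≤ k) :
    owDerivation (curve c Q P) (Polynomial.aeval (X 0) p) ∈ N (curve c Q P) k := by
  have expand : owDerivation (curve c Q P) (Polynomial.aeval (X 0) p)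
      = 2 * (Polynomial.aeval (X 0)
          (Polynomial.derivative p * (Polynomial.X + Polynomial.C c)) * X 1)
        - Polynomial.aeval (X 0) (Polynomial.derivative p * Q) := by
    rw [Derivation.map_aeval, owDerivation_X_zero, pderiv_one_curve]
    simp only [smul_eq_mul, map_mul, map_add, Polynomial.aeval_X, Polynomial.aeval_C,
      algebraMap_eq]
    ring
  have hX := natDegree_derivative_mul_le p (Polynomial.X + Polynomial.C c)
  have hXc := natDegree_X_add_C_le c
  have hQ' := natDegree_derivative_mul_le p Q
  rw [expand, two_mul]
  refine Submodule.sub_mem _ (Submodule.add_mem _ ?_ ?_) (aeval_mem_N (by omega)) <;>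
    exact aeval_mul_X_one_mem_N (by omega)

lemma owDerivation_aeval_mul_X_one_mem_N (hQ : Q.natDegree ≤ 2) (hP : P.natDegree ≤ 3)
    {q : Polynomial R} (hq : q.natDegree + 1 ≤ k) :
    owDerivation (curve c Q P) (Polynomial.aeval (X 0) q * X 1) ∈ N (curve c Q P) k := by
  have expand : owDerivation (curve c Q P) (Polynomial.aeval (X 0) q * X 1)
      = 2 * (Polynomial.aeval (X 0)
          (Polynomial.derivative q * (Polynomial.X + Polynomial.C c)) * X 1 ^ 2)
        - Polynomial.aeval (X 0) q * X 1 ^ 2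
        + Polynomial.aeval (X 0) (q * Polynomial.derivative Q) * X 1
        - Polynomial.aeval (X 0) (Polynomial.derivative q * Q) * X 1
        + Polynomial.aeval (X 0) (q * Polynomial.derivative P) := by
    rw [Derivation.leibniz, Derivation.map_aeval, owDerivation_X_zero, owDerivation_X_one,
      pderiv_one_curve, pderiv_zero_curve]
    simp only [smul_eq_mul, map_mul, map_add, Polynomial.aeval_X, Polynomial.aeval_C,
      algebraMap_eq]
    ring
  have hX := natDegree_derivative_mul_le q (Polynomial.X + Polynomial.C c)
  have hXc := natDegree_X_add_C_le c
  have hQ' := natDegree_derivative_mul_le q Q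
  have hQ'' : (q * Polynomial.derivative Q).natDegree ≤ q.natDegree + 1 :=
    Polynomial.natDegree_mul_le.trans (by have := Polynomial.natDegree_derivative_le Q; omega)
  have hP' : (q * Polynomial.derivative P).natDegree ≤ q.natDegree + 2 :=
    Polynomial.natDegree_mul_le.trans (by have := Polynomial.natDegree_derivative_le P; omega)
  rw [expand, two_mul]
  refine Submodule.add_mem _ (Submodule.sub_mem _ (Submodule.add_mem _ (Submodule.sub_mem _
    (Submodule.add_mem _ ?_ ?_) ?_) ?_) ?_) (aeval_mem_N (by omega))
  · exact aeval_mul_X_one_sq_mem_N hQ hP (by omega)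
  · exact aeval_mul_X_one_sq_mem_N hQ hP (by omega)
  · exact aeval_mul_X_one_sq_mem_N hQ hP hq
  · exact aeval_mul_X_one_mem_N (by omega)
  · exact aeval_mul_X_one_mem_N (by omega)

theorem map_owDerivation_M'_le_N (hQ : Q.natDegree ≤ 2) (hP : P.natDegree ≤ 3) :
    (M' k).map (owDerivation (curve c Q P)).toLinearMap ≤ N (curve c Q P) k := by
  refine Submodule.map_le_iff_le_comap.mpr (Submodule.span_le.mpr ?_)
  rintro _ (⟨i, hi, rfl⟩ | ⟨j, hj, rfl⟩)
  · have h := owDerivation_aeval_mem_N (c := c) (P := P) hQ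
      ((Polynomial.natDegree_X_pow_le i).trans hi)
    rwa [Polynomial.aeval_X_pow] at h
  · have h := owDerivation_aeval_mul_X_one_mem_N (k := k) (c := c) hQ hP (q := Polynomial.X ^ j)
      (by have := Polynomial.natDegree_X_pow_le (R := R) j; omega)
    rwa [Polynomial.aeval_X_pow] at h

end Filtration

end OdesskiiWolf

theorem OW_derivation_odd_filtration_general (K : Type*) [Field K]
    (c : K) (Q P : Polynomial K) (hQ : Q.degree ≤ 2) (hP : P.degree ≤ 3)
    (F : MvPolynomial (Fin 2) K)
    (hF : F = (X 0 + C c) * X 1 ^ 2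
          - Polynomial.aeval (X 0 : MvPolynomial (Fin 2) K) Q * X 1
          - Polynomial.aeval (X 0 : MvPolynomial (Fin 2) K) P)
    (k : ℕ) (g : MvPolynomial (Fin 2) K)
    (hg : g ∈ Submodule.span K
      ({a | ∃ i ≤ k, a = (X 0 : MvPolynomial (Fin 2) K) ^ i} ∪
       {a | ∃ j, j + 1 ≤ k ∧ a = (X 0 : MvPolynomial (Fin 2) K) ^ j * X 1})) :
    pderiv 1 F * pderiv 0 g - pderiv 0 F * pderiv 1 g ∈
      Submodule.span K
        ({a | ∃ i ≤ k + 1, a = (X 0 : MvPolynomial (Fin 2) K) ^ i} ∪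
         {a | ∃ j, j ≤ k ∧ a = (X 0 : MvPolynomial (Fin 2) K) ^ j * X 1} ∪
         {(X 1 : MvPolynomial (Fin 2) K) ^ 2}) ⊔
      Submodule.restrictScalars K (Ideal.span {F}) := by
  subst hF
  exact OdesskiiWolf.map_owDerivation_M'_le_N (Polynomial.natDegree_le_iff_degree_le.mpr hQ)
    (Polynomial.natDegree_le_iff_degree_le.mpr hP) (Submodule.mem_map_of_mem hg)

/-- Odd case: for `F = (t+c)x² - Q(t)x - P(t)` with `deg Q ≤ 2`, `deg P ≤ 3`, the
derivation `D_F(g) = (∂F/∂x)(∂g/∂t) - (∂F/∂t)(∂g/∂x)` maps the span `M'_k` of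
`{t^i : i ≤ k} ∪ {t^j x : j ≤ k-1}` into `N_{k+1} + (F)`, where `N_{k+1}` is spanned by
`{t^i : i ≤ k+1} ∪ {t^j x : j ≤ k} ∪ {x²}`. -/
theorem OW_derivation_odd_filtration (K : Type*) [Field K] [CharZero K]
    (c : K) (Q P : Polynomial K) (hQ : Q.degree ≤ 2) (hP : P.degree ≤ 3)
    (F : MvPolynomial (Fin 2) K)
    (hF : F = (X 0 + C c) * X 1 ^ 2
          - Polynomial.aeval (X 0 : MvPolynomial (Fin 2) K) Q * X 1
          - Polynomial.aeval (X 0 : MvPolynomial (Fin 2) K) P)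
    (k : ℕ) (hk : 1 ≤ k) (g : MvPolynomial (Fin 2) K)
    (hg : g ∈ Submodule.span K
      ({a | ∃ i ≤ k, a = (X 0 : MvPolynomial (Fin 2) K) ^ i} ∪
       {a | ∃ j, j + 1 ≤ k ∧ a = (X 0 : MvPolynomial (Fin 2) K) ^ j * X 1})) :
    pderiv 1 F * pderiv 0 g - pderiv 0 F * pderiv 1 g ∈
      Submodule.span K
        ({a | ∃ i ≤ k + 1, a = (X 0 : MvPolynomial (Fin 2) K) ^ i} ∪
         {a | ∃ j, j ≤ k ∧ a = (X 0 : MvPolynomial (Fin 2) K) ^ j * X 1} ∪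
         {(X 1 : MvPolynomial (Fin 2) K) ^ 2}) ⊔
      Submodule.restrictScalars K (Ideal.span {F}) :=
  OW_derivation_odd_filtration_general K c Q P hQ hP F hF k g hg
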